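/- arXiv:2403.10451 — 2 statements merged into one kernel-verified Lean document; each statement's English description precedes it below -/
import Mathlib

section
/- Fix T ∈ ℕ and B ∈ ℝ with 1 < B < T and ⌈B⌉ + ⌊B⌋ < T + 1. Then the weights β_l (l ∈ {0,…,T}) defined in the context are nonnegative and sum to 1, and the resulting mixed strategy of the algorithm player in SRP-R guarantees the value V: for every k ∈ {1,…,T}, Σ_{l=0}^{T} β_l · u(l,k) ≤ V, with equality for every k ∈ {1,…,⌈B⌉−1} ∪ {T}. In particular, max_{k ∈ {1,…,T}} Σ_l β_l·u(l,k) = V, so the competitive ratio of the finite-horizon ski-rental problem in this regime is V. -/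
/-!
The weights `β` make the algorithm player an equalizer. Below `n = ⌈B⌉ - 1` they grow
geometrically with ratio `B / (B - 1)`, which is exactly what makes the telescoping sums
`∑_{l<k} β_l (l + B) / k` and `∑_{l<k} β_l` differ by a constant, so every `k ≤ n` earns the
adversary `1 + (B - 1) β_0`. The last weight `β_n` is tuned so that every `k > n`, against
which the normaliser is `min(k, B) = B`, earns the same amount, and `β_0` is the
normalisation making the weights sum to `1`; rewriting `1 + (B - 1) β_0` gives `V`.
-/

open Finset

section Sums

variable {B : ℝ}

lemma geom_sum_div_sub_one (hB : B ≠ 1) (k : ℕ) :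
    ∑ l ∈ range k, (B / (B - 1)) ^ l = (B - 1) * ((B / (B - 1)) ^ k - 1) := by
  have hB' : B - 1 ≠ 0 := sub_ne_zero.mpr hB
  have hr : B / (B - 1) ≠ 1 := by
    rw [Ne, div_eq_one_iff_eq hB']; intro h; linarith
  rw [geom_sum_eq hr, div_sub_one hB', sub_sub_cancel, div_div_eq_mul_div, div_one, mul_comm]

lemma sum_div_sub_one_pow_mul_add (hB : B ≠ 1) (k : ℕ) :
    ∑ l ∈ range k, (B / (B - 1)) ^ l * (l + B) = (B - 1) * k * (B / (B - 1)) ^ k := by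
  induction k with
  | zero => simp
  | succ k ih =>
    rw [sum_range_succ, ih, pow_succ]
    field_simp
    push_cast
    ring

end Sums

lemma exists_nat_ceil_eq_add_one {B : ℝ} (hB : 1 < B) :
    ∃ n : ℕ, ⌈B⌉₊ = n + 1 ∧ 0 < n ∧ (n : ℝ) < B ∧ B ≤ n + 1 := by
  obtain ⟨n, hn⟩ : ∃ n, ⌈B⌉₊ = n + 1 :=
    ⟨⌈B⌉₊ - 1, by have := Nat.ceil_pos.mpr (zero_lt_one.trans hB); omega⟩
  obtain ⟨hnB, hBn⟩ := (Nat.ceil_eq_iff n.add_one_ne_zero).mp hn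
  rw [Nat.add_sub_cancel] at hnB
  push_cast at hBn
  exact ⟨n, hn, by exact_mod_cast (by linarith : (0 : ℝ) < n), hnB, hBn⟩

noncomputable def srprPayoff (B : ℝ) (l k : ℕ) : ℝ :=
  if l < k then ((l : ℝ) + B) / min (k : ℝ) B else (k : ℝ) / min (k : ℝ) B

section Payoff

variable {B : ℝ} {N k : ℕ}

lemma sum_mul_srprPayoff_of_le (β : ℕ → ℝ) (hk : 0 < k) (hkN : k ≤ N)
    (hkB : (k : ℝ) ≤ B) :
    ∑ l ∈ range N, β l * srprPayoff B l k =
      (∑ l ∈ range k, β l * (l + B)) / k +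
        (∑ l ∈ range N, β l - ∑ l ∈ range k, β l) := by
  have hk' : (k : ℝ) ≠ 0 := by positivity
  rw [← sum_range_add_sum_Ico _ hkN, ← sum_Ico_eq_sub _ hkN, sum_div]
  congr 1 <;> refine sum_congr rfl fun l hl => ?_
  · rw [srprPayoff, if_pos (mem_range.mp hl), min_eq_left hkB, mul_div_assoc]
  · rw [srprPayoff, if_neg (mem_Ico.mp hl).1.not_gt, min_eq_left hkB, div_self hk',
      mul_one]

lemma sum_mul_srprPayoff_of_ge (β : ℕ → ℝ) (hNk : N ≤ k) (hBk : B ≤ k) :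
    ∑ l ∈ range N, β l * srprPayoff B l k = (∑ l ∈ range N, β l * (l + B)) / B := by
  rw [sum_div]
  refine sum_congr rfl fun l hl => ?_
  rw [srprPayoff, if_pos ((mem_range.mp hl).trans_le hNk), min_eq_right hBk, mul_div_assoc]

end Payoff

-- The paper's `β_0` and `β`, with `n = ⌈B⌉ - 1`.
noncomputable def srprBaseWeight (B : ℝ) (n : ℕ) : ℝ :=
  ((B - 1) * ((B / (B - 1)) ^ n * B / n - 1))⁻¹

noncomputable def srprStrategy (B : ℝ) (n l : ℕ) : ℝ :=
  if l < n then (B / (B - 1)) ^ l * srprBaseWeight B n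
  else if l = n then (B / (B - 1)) ^ (n - 1) * (B - n) * (B / n) * srprBaseWeight B n
  else 0

section Strategy

variable {B : ℝ} {n k l : ℕ}

lemma srprStrategy_of_lt (hl : l < n) :
    srprStrategy B n l = (B / (B - 1)) ^ l * srprBaseWeight B n :=
  if_pos hl

lemma srprStrategy_self :
    srprStrategy B n n = (B / (B - 1)) ^ (n - 1) * (B - n) * (B / n) * srprBaseWeight B n := by
  simp [srprStrategy]

lemma srprStrategy_of_gt (hl : n < l) : srprStrategy B n l = 0 := by
  simp [srprStrategy, hl.not_gt, hl.ne']

lemma one_lt_div_sub_one_pow_mul_div (hB : 1 < B) (hn : 0 < n) (hnB : n < B) :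
    1 < (B / (B - 1)) ^ n * B / n := by
  have hr : 1 ≤ B / (B - 1) := by rw [le_div_iff₀ (by linarith)]; linarith
  have hBn : 1 < B / n := by rw [lt_div_iff₀ (by positivity)]; linarith
  rw [mul_div_assoc]
  exact one_lt_mul_of_le_of_lt (one_le_pow₀ hr) hBn

lemma srprBaseWeight_pos (hB : 1 < B) (hn : 0 < n) (hnB : n < B) : 0 < srprBaseWeight B n := by
  have := one_lt_div_sub_one_pow_mul_div hB hn hnB
  unfold srprBaseWeight
  have : 0 < B - 1 := by linarith
  positivity

lemma sub_one_mul_mul_srprBaseWeight (hB : 1 < B) (hn : 0 < n) (hnB : n < B) :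
    (B - 1) * ((B / (B - 1)) ^ n * B / n - 1) * srprBaseWeight B n = 1 :=
  mul_inv_cancel₀ <| ne_of_gt <|
    mul_pos (by linarith) (by linarith [one_lt_div_sub_one_pow_mul_div hB hn hnB])

lemma srprStrategy_nonneg (hB : 1 < B) (hn : 0 < n) (hnB : n < B) (l : ℕ) :
    0 ≤ srprStrategy B n l := by
  have := srprBaseWeight_pos hB hn hnB
  have : 0 < B - 1 := by linarith
  have : 0 < B - n := by linarith
  unfold srprStrategy
  split_ifs <;> positivity

lemma sum_range_srprStrategy (hB : B ≠ 1) (hk : k ≤ n) :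
    ∑ l ∈ range k, srprStrategy B n l =
      (B - 1) * ((B / (B - 1)) ^ k - 1) * srprBaseWeight B n := by
  rw [sum_congr rfl fun l hl => srprStrategy_of_lt ((mem_range.mp hl).trans_le hk), ← sum_mul,
    geom_sum_div_sub_one hB]

lemma sum_range_srprStrategy_mul_add (hB : B ≠ 1) (hk : k ≤ n) :
    ∑ l ∈ range k, srprStrategy B n l * (l + B) =
      (B - 1) * k * (B / (B - 1)) ^ k * srprBaseWeight B n := by
  rw [sum_congr rfl fun l hl => by rw [srprStrategy_of_lt ((mem_range.mp hl).trans_le hk),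
    mul_right_comm], ← sum_mul, sum_div_sub_one_pow_mul_add hB]

lemma srprStrategy_self' (hB : B ≠ 1) (hn : 0 < n) :
    srprStrategy B n n = (B - 1) * (B / (B - 1)) ^ n * ((B - n) / n) * srprBaseWeight B n := by
  obtain ⟨n, rfl⟩ := Nat.exists_eq_add_of_lt hn
  rw [srprStrategy_self, zero_add, Nat.add_sub_cancel, pow_succ]
  field_simp

lemma sum_srprStrategy (hB : 1 < B) (hn : 0 < n) (hnB : n < B) :
    ∑ l ∈ range (n + 1), srprStrategy B n l = 1 := by
  have key := sub_one_mul_mul_srprBaseWeight hB hn hnB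
  rw [sum_range_succ, sum_range_srprStrategy hB.ne' le_rfl, srprStrategy_self' hB.ne' hn]
  generalize (B / (B - 1)) ^ n = c at key ⊢
  field_simp at key ⊢
  linear_combination key

lemma sum_srprStrategy_mul_add (hB : 1 < B) (hn : 0 < n) (hnB : n < B) :
    ∑ l ∈ range (n + 1), srprStrategy B n l * (l + B) =
      B * (1 + (B - 1) * srprBaseWeight B n) := by
  have key := sub_one_mul_mul_srprBaseWeight hB hn hnB
  rw [sum_range_succ, sum_range_srprStrategy_mul_add hB.ne' le_rfl, srprStrategy_self' hB.ne' hn]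
  generalize (B / (B - 1)) ^ n = c at key ⊢
  field_simp at key ⊢
  linear_combination B * key

lemma sum_srprStrategy_mul_srprPayoff (hB : 1 < B) (hn : 0 < n) (hnB : n < B) (hBn : B ≤ n + 1)
    (hk : 0 < k) :
    ∑ l ∈ range (n + 1), srprStrategy B n l * srprPayoff B l k =
      1 + (B - 1) * srprBaseWeight B n := by
  rcases le_or_gt k n with hkn | hnk
  · have hkB : (k : ℝ) ≤ B := by linarith [(Nat.cast_le (α := ℝ)).mpr hkn]
    rw [sum_mul_srprPayoff_of_le _ hk (by omega) hkB, sum_srprStrategy hB hn hnB,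
      sum_range_srprStrategy hB.ne' hkn, sum_range_srprStrategy_mul_add hB.ne' hkn]
    field_simp
    ring
  · have hBk : B ≤ k := hBn.trans (by exact_mod_cast hnk)
    rw [sum_mul_srprPayoff_of_ge _ hnk hBk, sum_srprStrategy_mul_add hB hn hnB,
      mul_div_cancel_left₀ _ (by positivity)]

lemma one_add_sub_one_mul_srprBaseWeight (hB : 1 < B) (hn : 0 < n) (hnB : n < B) :
    1 + (B - 1) * srprBaseWeight B n = (1 - n / B * ((B - 1) / B) ^ n)⁻¹ := by
  have ha := one_lt_div_sub_one_pow_mul_div hB hn hnB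
  have hB' : B - 1 ≠ 0 := by linarith
  rw [srprBaseWeight, ← inv_div B (B - 1), inv_pow,
    show n / B * ((B / (B - 1)) ^ n)⁻¹ = ((B / (B - 1)) ^ n * B / n)⁻¹ by field_simp]
  generalize (B / (B - 1)) ^ n * B / n = a at *
  have ha' : a - 1 ≠ 0 := by linarith
  rw [show 1 - a⁻¹ = (a - 1) / a by field_simp, inv_div]
  field_simp
  ring

end Strategy

/-- For `1 < B < T` and `⌈B⌉ + ⌊B⌋ < T + 1`, the explicit weights `β` form a
mixed strategy of the algorithm player in SRP-R that guarantees the value `V`: the adversary's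
expected payoff is at most `V` for every pure strategy `k ∈ {1,…,T}`, with equality for
`k ∈ {1,…,⌈B⌉−1} ∪ {T}`; hence the competitive ratio in this regime is `V`. -/
theorem srpr_worst_case_strategy_small_B
    (T : ℕ) (B : ℝ) (hB1 : 1 < B) (hBT : B < T)
    (u : ℕ → ℕ → ℝ)
    (hu : ∀ l k, u l k =
      if l < k then ((l : ℝ) + B) / min (k : ℝ) B else (k : ℝ) / min (k : ℝ) B)
    (β : ℕ → ℝ) (β0 V : ℝ)
    (hβ0 : β0 = ((B - 1) * ((B / (B - 1)) ^ (⌈B⌉₊ - 1) * B / ((⌈B⌉₊ : ℝ) - 1) - 1))⁻¹)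
    (hβlow : ∀ l, l + 2 ≤ ⌈B⌉₊ → β l = (B / (B - 1)) ^ l * β0)
    (hβtop : β (⌈B⌉₊ - 1) = (B / (B - 1)) ^ (⌈B⌉₊ - 2) * (B + 1 - (⌈B⌉₊ : ℝ))
                  * (B / ((⌈B⌉₊ : ℝ) - 1)) * β0)
    (hβelse : ∀ l, ¬ l + 2 ≤ ⌈B⌉₊ → l ≠ ⌈B⌉₊ - 1 → β l = 0)
    (hV : V = (1 - (((⌈B⌉₊ : ℝ) - 1) / B) * ((B - 1) / B) ^ (⌈B⌉₊ - 1))⁻¹) :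
    (∀ l ≤ T, 0 ≤ β l) ∧
    (∑ l ∈ Finset.range (T + 1), β l = 1) ∧
    (∀ k ∈ Finset.Icc 1 T, ∑ l ∈ Finset.range (T + 1), β l * u l k ≤ V) ∧
    (∀ k ∈ Finset.Icc 1 T, (k + 1 ≤ ⌈B⌉₊ ∨ k = T) →
        ∑ l ∈ Finset.range (T + 1), β l * u l k = V) ∧
    ((Finset.Icc 1 T).sup' (Finset.nonempty_Icc.mpr (by exact_mod_cast (hB1.trans hBT).le))
        (fun k => ∑ l ∈ Finset.range (T + 1), β l * u l k) = V) := by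
  obtain rfl : u = srprPayoff B := funext₂ hu
  obtain ⟨n, hn, hn0, hnB, hBn⟩ := exists_nat_ceil_eq_add_one hB1
  have hnT : n < T := by have := Nat.ceil_le.mpr hBT.le; omega
  simp only [hn, Nat.cast_add, Nat.cast_one, add_sub_cancel_right, Nat.add_sub_cancel,
    add_sub_add_right_eq_sub, show n + 1 - 2 = n - 1 by omega] at hβ0 hβlow hβtop hβelse hV
  have hβ : β = srprStrategy B n := by
    funext l
    rcases lt_trichotomy l n with hl | rfl | hl
    · rw [srprStrategy_of_lt hl, hβlow l (by omega), hβ0, srprBaseWeight]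
    · rw [srprStrategy_self, hβtop, hβ0, srprBaseWeight]
    · rw [srprStrategy_of_gt hl, hβelse l (by omega) (by omega)]
  subst hβ hV
  have hval : ∀ k ∈ Icc 1 T, ∑ l ∈ range (T + 1), srprStrategy B n l * srprPayoff B l k =
      (1 - n / B * ((B - 1) / B) ^ n)⁻¹ := fun k hk => by
    rw [eventually_constant_sum (fun l hl => by rw [srprStrategy_of_gt hl, zero_mul]) (by omega),
      sum_srprStrategy_mul_srprPayoff hB1 hn0 hnB hBn (mem_Icc.mp hk).1,
      one_add_sub_one_mul_srprBaseWeight hB1 hn0 hnB]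
  refine ⟨fun l _ => srprStrategy_nonneg hB1 hn0 hnB l, ?_, fun k hk => (hval k hk).le,
    fun k hk _ => hval k hk, sup'_eq_of_forall _ _ hval⟩
  rw [eventually_constant_sum (fun l hl => srprStrategy_of_gt hl) (by omega),
    sum_srprStrategy hB1 hn0 hnB]
end

section
/- Fix T ≥ 1, B > 1 and p ∈ [0,1]. Define the stopping rule s* by s*(X) = min{ i ∈ {1,…,T} : X_i = 1 and p·(T−i) ≥ B−1 } (and s*(X) = T+1 if no such i exists). Then s* is adapted, and it is Bayesian optimal: for every adapted stopping rule s, E_p[cost(s*, X)] ≤ E_p[cost(s, X)]. In particular, if p·(T−1) < B−1 then the rule that never stops minimizes the expected cost. -/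
open Finset

/-- An adapted stopping rule for horizon `T`: it takes values in `{1,…,T+1}` and its value is
determined by the coordinates `1,…,min(s(X),T)` of the input. -/
def Adapted (T : ℕ) (s : (Fin T → Bool) → ℕ) : Prop :=
  (∀ X, 1 ≤ s X ∧ s X ≤ T + 1) ∧
  ∀ X Y : Fin T → Bool, (∀ i : Fin T, (i : ℕ) < min (s X) T → X i = Y i) → s Y = s X

/-- Cost of the stopping rule `s` on input `X`: rent (cost 1) on each good-weather day strictly
before the stopping day, plus the stopping cost `B` if it stops by day `T`. -/
noncomputable def cost (T : ℕ) (B : ℝ) (s : (Fin T → Bool) → ℕ) (X : Fin T → Bool) : ℝ :=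
  (∑ i : Fin T, if (i : ℕ) + 1 < s X ∧ X i = true then (1 : ℝ) else 0)
    + (if s X ≤ T then B else 0)

/-- Number of good-weather days in input `X`. -/
def good (T : ℕ) (X : Fin T → Bool) : ℕ := (Finset.univ.filter fun i => X i = true).card

/-- Expectation over the i.i.d. Bernoulli(p) distribution on inputs. -/
noncomputable def Ep (T : ℕ) (p : ℝ) (f : (Fin T → Bool) → ℝ) : ℝ :=
  ∑ X : Fin T → Bool, p ^ good T X * (1 - p) ^ (T - good T X) * f X

/-- The offline (hindsight) optimum on input `X`. -/
noncomputable def OPTX (T : ℕ) (B : ℝ) (X : Fin T → Bool) : ℝ := min (good T X : ℝ) B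

open Classical in
/-- The Bayesian optimal stopping rule for i.i.d. probability `p`: stop on the first
good-weather day `i` (1-indexed) with `p·(T−i) ≥ B−1`, and never stop otherwise. -/
noncomputable def sStar (T : ℕ) (B p : ℝ) (X : Fin T → Bool) : ℕ :=
  if h : (Finset.univ.filter fun i : Fin T =>
      X i = true ∧ B - 1 ≤ p * ((T : ℝ) - ((i : ℕ) + 1))).Nonempty
  then (((Finset.univ.filter fun i : Fin T =>
      X i = true ∧ B - 1 ≤ p * ((T : ℝ) - ((i : ℕ) + 1))).min' h : Fin T) : ℕ) + 1
  else T + 1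

/-!
Backward induction. Once the first day is revealed, an adapted rule on `T + 1` days either stops at
once (cost `B`) or continues as an adapted rule on the remaining `T` days. Hence every adapted rule
has expected cost at least `v_T`, where `v_0 = 0` and `v_{n+1} = p min(B, 1 + v_n) + (1 - p) v_n`:
waiting through a bad day is free, and on a good day one either stops or pays rent and goes on.
Since `min(B - 1, p n) ≤ v_n ≤ p n`, stopping on a good day with `n` days left is the better choice
exactly when `p n ≥ B - 1`; this is the rule `s*`, which therefore attains `v_T`. When
`p (T - 1) < B - 1` the rule `s*` never stops.
-/

section FirstHit

variable {n : ℕ}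

noncomputable def firstHit (P : Fin n → Prop) [DecidablePred P] : ℕ :=
  if h : ∃ i, P i then Fin.find P h + 1 else n + 1

lemma firstHit_of_forall_not {P : Fin n → Prop} [DecidablePred P] (h : ∀ i, ¬ P i) :
    firstHit P = n + 1 := by
  rw [firstHit, dif_neg (not_exists.2 h)]

lemma firstHit_cons (P : Fin (n + 1) → Prop) [DecidablePred P] :
    firstHit P = if P 0 then 1 else firstHit (fun i : Fin n => P i.succ) + 1 := by
  by_cases h0 : P 0
  · rw [if_pos h0, firstHit, dif_pos ⟨0, h0⟩, (Fin.find_eq_zero _).2 h0, Fin.val_zero]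
  · rw [if_neg h0]
    by_cases h : ∃ i : Fin n, P i.succ
    · have h' : ∃ i, P i := ⟨_, h.choose_spec⟩
      rw [firstHit, firstHit, dif_pos h', dif_pos h, Fin.find_of_not_zero h' h0, Fin.val_succ]
    · have h' : ∀ i, ¬ P i := Fin.forall_fin_succ.2 ⟨h0, not_exists.1 h⟩
      rw [firstHit_of_forall_not h', firstHit_of_forall_not (not_exists.1 h)]

lemma Finset.min'_filter_univ_eq_find (P : Fin n → Prop) [DecidablePred P]
    (h : (univ.filter P).Nonempty) :
    (univ.filter P).min' h = Fin.find P (by simpa [filter_nonempty_iff] using h) := by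
  rw [eq_comm, Fin.find_eq_iff]
  refine ⟨(mem_filter.1 (min'_mem _ h)).2, fun j hj hPj => ?_⟩
  exact not_le.2 hj (min'_le _ _ (mem_filter.2 ⟨mem_univ j, hPj⟩))

lemma dite_filter_univ_min'_eq_firstHit (P : Fin n → Prop) [DecidablePred P] :
    (if h : (univ.filter P).Nonempty then ((univ.filter P).min' h : ℕ) + 1 else n + 1)
      = firstHit P := by
  rw [firstHit]
  by_cases h : (univ.filter P).Nonempty
  · rw [dif_pos h, dif_pos (by simpa [filter_nonempty_iff] using h), Finset.min'_filter_univ_eq_find]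
  · rw [dif_neg h, dif_neg (by simpa [filter_nonempty_iff] using h)]

end FirstHit

open Classical in
lemma sStar_eq_firstHit (T : ℕ) (B p : ℝ) (X : Fin T → Bool) :
    sStar T B p X = firstHit fun i : Fin T => X i = true ∧ B - 1 ≤ p * ((T : ℝ) - ((i : ℕ) + 1)) :=
  dite_filter_univ_min'_eq_firstHit _

lemma sStar_cons (T : ℕ) (B p : ℝ) (b : Bool) (Y : Fin T → Bool) :
    sStar (T + 1) B p (Fin.cons b Y) =
      if b = true ∧ B - 1 ≤ p * T then 1 else sStar T B p Y + 1 := by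
  classical
  rw [sStar_eq_firstHit, sStar_eq_firstHit, firstHit_cons]
  simp only [Fin.cons_zero, Fin.cons_succ, Fin.val_zero, Fin.val_succ, Nat.cast_add, Nat.cast_one,
    Nat.cast_zero, zero_add, add_sub_cancel_right, add_sub_add_right_eq_sub]

lemma sStar_eq_never {T : ℕ} {B p : ℝ} (hp : 0 ≤ p) (h : p * ((T : ℝ) - 1) < B - 1) :
    sStar T B p = fun _ => T + 1 := by
  classical
  funext X
  rw [sStar_eq_firstHit, firstHit_of_forall_not]
  rintro i ⟨-, hi⟩
  have : p * ((T : ℝ) - ((i : ℕ) + 1)) ≤ p * ((T : ℝ) - 1) := by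
    gcongr; simp
  linarith

section Adapted

variable {T : ℕ}

lemma adapted_const {c : ℕ} (h₁ : 1 ≤ c) (h₂ : c ≤ T + 1) : Adapted T fun _ => c :=
  ⟨fun _ => ⟨h₁, h₂⟩, fun _ _ _ => rfl⟩

lemma Adapted.cons_eq_one {s : (Fin (T + 1) → Bool) → ℕ} (hs : Adapted (T + 1) s) {b : Bool}
    {Y : Fin T → Bool} (h : s (Fin.cons b Y) = 1) (Z : Fin T → Bool) : s (Fin.cons b Z) = 1 := by
  refine (hs.2 (Fin.cons b Y) (Fin.cons b Z) fun i hi => ?_).trans h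
  obtain rfl : i = 0 := Fin.ext (by rw [h] at hi; simp at hi; omega)
  rfl

lemma adapted_succ_iff {s : (Fin (T + 1) → Bool) → ℕ} :
    Adapted (T + 1) s ↔ ∀ b : Bool, (∀ Y, s (Fin.cons b Y) = 1) ∨
      ∃ s' : (Fin T → Bool) → ℕ, Adapted T s' ∧ ∀ Y, s (Fin.cons b Y) = s' Y + 1 := by
  constructor
  · intro hs b
    by_cases h1 : s (Fin.cons b default) = 1
    · exact Or.inl (hs.cons_eq_one h1)
    have h2 : ∀ Y, 2 ≤ s (Fin.cons b Y) := fun Y => by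
      have : s (Fin.cons b Y) ≠ 1 := fun h => h1 (hs.cons_eq_one h default)
      have := (hs.1 (Fin.cons b Y)).1
      omega
    refine Or.inr ⟨fun Y => s (Fin.cons b Y) - 1, ⟨fun Y => ?_, fun Y Z hYZ => ?_⟩,
      fun Y => ?_⟩ <;> beta_reduce at *
    · have := h2 Y
      have := (hs.1 (Fin.cons b Y)).2
      omega
    · rw [hs.2 (Fin.cons b Y) (Fin.cons b Z) fun i => Fin.cases (fun _ => rfl)
        (fun j hj => hYZ j (by simp only [Fin.val_succ] at hj; omega)) i]
    · have := h2 Y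
      omega
  · intro h
    have range : ∀ X, 1 ≤ s X ∧ s X ≤ T + 1 + 1 := by
      intro X
      induction X using Fin.consCases with | cons a X =>
      rcases h a with h | ⟨s', hs', h⟩
      · rw [h]; omega
      · have := hs'.1 X; rw [h]; omega
    refine ⟨range, fun X Y hXY => ?_⟩
    induction X using Fin.consCases with | cons a X =>
    induction Y using Fin.consCases with | cons c Y =>
    obtain rfl : a = c := hXY 0 (by have := (range (Fin.cons a X)).1; simp; omega)
    rcases h a with h | ⟨s', hs', h⟩
    · rw [h, h]
    · rw [h, h, hs'.2 X Y fun i hi => hXY i.succ (by rw [h]; simp; omega)]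

end Adapted

lemma sStar_zero (B p : ℝ) : sStar 0 B p = fun _ => 1 := by
  classical
  funext X
  exact (sStar_eq_firstHit 0 B p X).trans (firstHit_of_forall_not fun i => i.elim0)

lemma adapted_sStar (B p : ℝ) : ∀ T, Adapted T (sStar T B p)
  | 0 => sStar_zero B p ▸ adapted_const le_rfl le_rfl
  | T + 1 => adapted_succ_iff.2 fun b => by
      by_cases hc : b = true ∧ B - 1 ≤ p * T
      · simp only [sStar_cons, if_pos hc, forall_const, true_or]
      · simp only [sStar_cons, if_neg hc]
        exact Or.inr ⟨_, adapted_sStar B p T, fun _ => rfl⟩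

section Cost

variable {T : ℕ} {B : ℝ}

lemma cost_zero {s : (Fin 0 → Bool) → ℕ} {X : Fin 0 → Bool} (h : 1 ≤ s X) : cost 0 B s X = 0 := by
  simp [cost, show ¬ s X ≤ 0 by omega]

lemma cost_of_eq_one {s : (Fin (T + 1) → Bool) → ℕ} {X : Fin (T + 1) → Bool} (h : s X = 1) :
    cost (T + 1) B s X = B := by
  simp [cost, h]

lemma cost_cons {s : (Fin (T + 1) → Bool) → ℕ} {s' : (Fin T → Bool) → ℕ} {b : Bool}
    {Y : Fin T → Bool} (h₁ : 1 ≤ s' Y) (h : s (Fin.cons b Y) = s' Y + 1) :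
    cost (T + 1) B s (Fin.cons b Y) = b.toNat + cost T B s' Y := by
  have : s' Y ≠ 0 := by omega
  simp only [cost, h, Fin.sum_univ_succ, Fin.cons_zero, Fin.cons_succ, Fin.val_zero, Fin.val_succ,
    add_lt_add_iff_right, add_le_add_iff_right]
  cases b <;> simp [add_assoc, this]

end Cost

section Expectation

variable {T : ℕ} {p : ℝ}

lemma good_cons (b : Bool) (Y : Fin T → Bool) :
    good (T + 1) (Fin.cons b Y) = b.toNat + good T Y := by
  simp only [good, card_filter, Fin.sum_univ_succ, Fin.cons_zero, Fin.cons_succ]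
  cases b <;> simp

lemma good_le (X : Fin T → Bool) : good T X ≤ T :=
  (card_filter_le _ _).trans_eq (card_fin T)

lemma weight_cons (b : Bool) (Y : Fin T → Bool) :
    p ^ good (T + 1) (Fin.cons b Y) * (1 - p) ^ (T + 1 - good (T + 1) (Fin.cons b Y))
      = cond b p (1 - p) * (p ^ good T Y * (1 - p) ^ (T - good T Y)) := by
  have := good_le Y
  rw [good_cons]
  cases b
  · rw [Bool.toNat_false, zero_add, show T + 1 - good T Y = T - good T Y + 1 by omega]
    simp only [cond_false, pow_succ]
    ring
  · rw [Bool.toNat_true, show T + 1 - (1 + good T Y) = T - good T Y by omega]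
    simp only [cond_true, pow_add, pow_one]
    ring

lemma Ep_succ (f : (Fin (T + 1) → Bool) → ℝ) :
    Ep (T + 1) p f = p * Ep T p (fun Y => f (Fin.cons true Y))
      + (1 - p) * Ep T p (fun Y => f (Fin.cons false Y)) := by
  rw [Ep, ← (Fin.consEquiv fun _ => Bool).sum_comp, Fintype.sum_prod_type, Fintype.sum_bool,
    Ep, Ep, mul_sum, mul_sum]
  simp only [Fin.consEquiv, Equiv.coe_fn_mk, weight_cons, cond_true, cond_false, mul_assoc]

lemma Ep_zero (f : (Fin 0 → Bool) → ℝ) (X : Fin 0 → Bool) : Ep 0 p f = f X := by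
  simp [Ep, good, Subsingleton.elim _ X]

lemma Ep_const (c : ℝ) : Ep T p (fun _ => c) = c := by
  induction T with
  | zero => exact Ep_zero _ Fin.elim0
  | succ T ih => rw [Ep_succ, ih]; ring

lemma Ep_const_add (a : ℝ) (f : (Fin T → Bool) → ℝ) :
    Ep T p (fun X => a + f X) = a + Ep T p f := by
  induction T with
  | zero => simp only [Ep_zero _ Fin.elim0]
  | succ T ih => rw [Ep_succ, Ep_succ, ih, ih]; ring

end Expectation

noncomputable def optValue (B p : ℝ) : ℕ → ℝ
  | 0 => 0
  | n + 1 => p * min B (1 + optValue B p n) + (1 - p) * optValue B p n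

section OptValue

variable {B p : ℝ}

lemma optValue_le (hB : 0 ≤ B) (hp₀ : 0 ≤ p) (hp₁ : p ≤ 1) (n : ℕ) : optValue B p n ≤ B := by
  induction n with
  | zero => exact hB
  | succ n ih =>
    calc optValue B p (n + 1) = p * min B (1 + optValue B p n) + (1 - p) * optValue B p n := rfl
      _ ≤ p * B + (1 - p) * B := by gcongr; exact min_le_left _ _
      _ = B := by ring

lemma optValue_le_mul (hp₀ : 0 ≤ p) (n : ℕ) : optValue B p n ≤ p * n := by
  induction n with
  | zero => simp [optValue]
  | succ n ih =>
    calc optValue B p (n + 1) = p * min B (1 + optValue B p n) + (1 - p) * optValue B p n := rfl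
      _ ≤ p * (1 + optValue B p n) + (1 - p) * optValue B p n := by gcongr; exact min_le_right _ _
      _ ≤ p * (n + 1 : ℕ) := by push_cast; linarith

lemma min_le_optValue (hp₀ : 0 ≤ p) (hp₁ : p ≤ 1) (n : ℕ) :
    min (B - 1) (p * n) ≤ optValue B p n := by
  induction n with
  | zero => simp [optValue]
  | succ n ih =>
    show _ ≤ p * min B (1 + optValue B p n) + (1 - p) * optValue B p n
    rcases le_total (B - 1) (p * n) with h | h
    · rw [min_eq_left h] at ih
      rw [min_eq_left (by linarith : B ≤ 1 + optValue B p n)]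
      exact (min_le_left _ _).trans (by nlinarith)
    · rw [min_eq_right h] at ih
      have : 1 + p * n ≤ min B (1 + optValue B p n) := le_min (by linarith) (by linarith)
      refine (min_le_right _ _).trans ?_
      push_cast
      nlinarith

end OptValue

section Optimality

variable {T : ℕ} {B p : ℝ}

lemma Ep_cost_cons_of_adapted {s : (Fin (T + 1) → Bool) → ℕ} (hs : Adapted (T + 1) s) (b : Bool) :
    Ep T p (fun Y => cost (T + 1) B s (Fin.cons b Y)) = B ∨ ∃ s' : (Fin T → Bool) → ℕ,
      Adapted T s' ∧ Ep T p (fun Y => cost (T + 1) B s (Fin.cons b Y))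
        = b.toNat + Ep T p (cost T B s') := by
  rcases adapted_succ_iff.1 hs b with h | ⟨s', hs', h⟩
  · have hc : ∀ Y, cost (T + 1) B s (Fin.cons b Y) = B := fun Y => cost_of_eq_one (h Y)
    simp only [hc, Ep_const, true_or]
  · have hc : ∀ Y, cost (T + 1) B s (Fin.cons b Y) = b.toNat + cost T B s' Y :=
      fun Y => cost_cons (hs'.1 Y).1 (h Y)
    exact Or.inr ⟨s', hs', by simp only [hc, Ep_const_add]⟩

lemma optValue_le_Ep_cost (hB : 0 ≤ B) (hp₀ : 0 ≤ p) (hp₁ : p ≤ 1)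
    {s : (Fin T → Bool) → ℕ} (hs : Adapted T s) : optValue B p T ≤ Ep T p (cost T B s) := by
  induction T with
  | zero => rw [Ep_zero _ default, cost_zero (hs.1 _).1]; rfl
  | succ T ih =>
    have branch (b : Bool) :
        min B (b.toNat + optValue B p T) ≤ Ep T p (fun Y => cost (T + 1) B s (Fin.cons b Y)) := by
      rcases Ep_cost_cons_of_adapted hs b with h | ⟨s', hs', h⟩ <;> rw [h]
      · exact min_le_left _ _
      · exact (min_le_right _ _).trans (add_le_add_right (ih hs') _)
    have htrue := branch true
    have hfalse := branch false
    rw [Bool.toNat_true, Nat.cast_one] at htrue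
    rw [Bool.toNat_false, Nat.cast_zero, zero_add, min_eq_right (optValue_le hB hp₀ hp₁ T)] at hfalse
    rw [Ep_succ, optValue]
    gcongr

lemma cost_sStar_cons (b : Bool) (Y : Fin T → Bool) :
    cost (T + 1) B (sStar (T + 1) B p) (Fin.cons b Y) =
      if b = true ∧ B - 1 ≤ p * T then B else b.toNat + cost T B (sStar T B p) Y := by
  split_ifs with hc
  · exact cost_of_eq_one (by rw [sStar_cons, if_pos hc])
  · exact cost_cons ((adapted_sStar B p T).1 Y).1 (by rw [sStar_cons, if_neg hc])

lemma Ep_cost_sStar (hp₀ : 0 ≤ p) (hp₁ : p ≤ 1) (T : ℕ) :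
    Ep T p (cost T B (sStar T B p)) = optValue B p T := by
  induction T with
  | zero => rw [Ep_zero _ default, cost_zero ((adapted_sStar B p 0).1 _).1]; rfl
  | succ T ih =>
    rw [Ep_succ, optValue]
    by_cases hc : B - 1 ≤ p * T
    · have hstop : B - 1 ≤ optValue B p T :=
        min_eq_left hc ▸ min_le_optValue hp₀ hp₁ T
      simp only [cost_sStar_cons, hc, and_true, if_true, Bool.false_eq_true, if_false,
        Ep_const, ih, min_eq_left (by linarith : B ≤ 1 + optValue B p T),
        Bool.toNat_false, Nat.cast_zero, zero_add]
    · have hgo : 1 + optValue B p T ≤ B := by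
        linarith [optValue_le_mul (B := B) hp₀ T]
      simp only [cost_sStar_cons, hc, and_false, if_false, Ep_const_add, ih, min_eq_right hgo,
        Bool.toNat_true, Bool.toNat_false, Nat.cast_one, Nat.cast_zero, zero_add]

end Optimality

theorem bayesian_optimal_rule_general
    (T : ℕ) (B : ℝ) (hB : 1 < B) (p : ℝ) (hp : p ∈ Set.Icc (0 : ℝ) 1) :
    Adapted T (sStar T B p) ∧
    (∀ s : (Fin T → Bool) → ℕ, Adapted T s →
      Ep T p (cost T B (sStar T B p)) ≤ Ep T p (cost T B s)) ∧
    (p * ((T : ℝ) - 1) < B - 1 →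
      ∀ s : (Fin T → Bool) → ℕ, Adapted T s →
        Ep T p (cost T B fun _ => T + 1) ≤ Ep T p (cost T B s)) := by
  obtain ⟨hp₀, hp₁⟩ := hp
  have optimal : ∀ s : (Fin T → Bool) → ℕ, Adapted T s →
      Ep T p (cost T B (sStar T B p)) ≤ Ep T p (cost T B s) := fun s hs =>
    (Ep_cost_sStar hp₀ hp₁ T).trans_le (optValue_le_Ep_cost (by linarith) hp₀ hp₁ hs)
  refine ⟨adapted_sStar B p T, optimal, fun hnever => ?_⟩
  rw [← sStar_eq_never hp₀ hnever]
  exact optimal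

/-- The rule `sStar` is adapted and Bayesian optimal: it minimizes the
expected cost under the i.i.d. Bernoulli(p) input distribution among all adapted stopping
rules. In particular, if `p(T−1) < B−1` then never stopping minimizes the expected cost. -/
theorem bayesian_optimal_rule
    (T : ℕ) (hT : 1 ≤ T) (B : ℝ) (hB : 1 < B) (p : ℝ) (hp : p ∈ Set.Icc (0 : ℝ) 1) :
    Adapted T (sStar T B p) ∧
    (∀ s : (Fin T → Bool) → ℕ, Adapted T s →
      Ep T p (cost T B (sStar T B p)) ≤ Ep T p (cost T B s)) ∧
    (p * ((T : ℝ) - 1) < B - 1 →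
      ∀ s : (Fin T → Bool) → ℕ, Adapted T s →
        Ep T p (cost T B fun _ => T + 1) ≤ Ep T p (cost T B s)) :=
  bayesian_optimal_rule_general T B hB p hp
end
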